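/- For every antichain Γ in the poset Δ⁺ of positive roots of type A_n, one has 𝔛(Γ)* = 𝔛⁻¹(Γ*); equivalently, 𝔛(𝔛(Γ)*) = Γ*, i.e., 𝔛⁻¹ = ∗ ∘ 𝔛 ∘ ∗ where ∗ is the duality map on antichains. -/

import Mathlib

open Finset

/-- The root order on pairs: `(i,j) ≼ (i',j')` iff `i' ≤ i` and `j ≤ j'`. -/
def rle (p q : ℕ × ℕ) : Prop := q.1 ≤ p.1 ∧ p.2 ≤ q.2

instance : DecidableRel rle := fun p q =>
  inferInstanceAs (Decidable (q.1 ≤ p.1 ∧ p.2 ≤ q.2))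

/-- The positive roots of type `A_n`, modelled as pairs `(i,j)` with `1 ≤ i ≤ j ≤ n`. -/
def roots (n : ℕ) : Finset (ℕ × ℕ) :=
  ((Finset.Icc 1 n) ×ˢ (Finset.Icc 1 n)).filter (fun p => p.1 ≤ p.2)

/-- `Γ` is an antichain in `Δ⁺(A_n)`: a set of pairwise incomparable positive roots. -/
def IsAC (n : ℕ) (Γ : Finset (ℕ × ℕ)) : Prop :=
  Γ ⊆ roots n ∧ ∀ p ∈ Γ, ∀ q ∈ Γ, rle p q → p = q

/-- The upper ideal `I(Γ) = {x ∈ Δ⁺ : ∃ γ ∈ Γ, γ ≼ x}` generated by `Γ`. -/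
def upIdeal (n : ℕ) (Γ : Finset (ℕ × ℕ)) : Finset (ℕ × ℕ) :=
  (roots n).filter (fun x => ∃ γ ∈ Γ, rle γ x)

/-- The set of maximal elements of `S` with respect to the root order. -/
def maxOf (S : Finset (ℕ × ℕ)) : Finset (ℕ × ℕ) :=
  S.filter (fun x => ∀ y ∈ S, rle x y → y = x)

/-- The set of minimal elements of `S` with respect to the root order. -/
def minOf (S : Finset (ℕ × ℕ)) : Finset (ℕ × ℕ) :=
  S.filter (fun x => ∀ y ∈ S, rle y x → y = x)

/-- The reverse operator `𝔛`, sending an antichain `Γ` to the set of maximal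
elements of `Δ⁺ \ I(Γ)`. -/
def Xrev (n : ℕ) (Γ : Finset (ℕ × ℕ)) : Finset (ℕ × ℕ) :=
  maxOf (roots n \ upIdeal n Γ)

/-- `r_Γ(γ) = #(I(Γ) \ {γ})_min − #I(Γ)_min + 1`. -/
def rGam (n : ℕ) (Γ : Finset (ℕ × ℕ)) (γ : ℕ × ℕ) : ℤ :=
  ((minOf (upIdeal n Γ \ {γ})).card : ℤ) - ((minOf (upIdeal n Γ)).card : ℤ) + 1

/-- The OY-number `𝒴(Γ) = Σ_{γ ∈ Γ} r_Γ(γ)`; in particular `𝒴(∅) = 0`. -/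
def OY (n : ℕ) (Γ : Finset (ℕ × ℕ)) : ℤ := ∑ γ ∈ Γ, rGam n Γ γ

/-- The dual antichain `Γ*`: if `Γ` has first coordinates `𝐢` and second
coordinates `𝐣`, then `Γ*` pairs the elements of `[n] \ 𝐣` (listed increasingly,
as first coordinates) with the elements of `[n] \ 𝐢` (listed increasingly,
as second coordinates). -/
def dualAC (n : ℕ) (Γ : Finset (ℕ × ℕ)) : Finset (ℕ × ℕ) :=
  let iStar := ((Finset.Icc 1 n) \ (Γ.image Prod.snd)).sort (· ≤ ·)
  let jStar := ((Finset.Icc 1 n) \ (Γ.image Prod.fst)).sort (· ≤ ·)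
  (Finset.range iStar.length).image (fun t => (iStar.getD t 0, jStar.getD t 0))

/-!
Write `c_S(x) = #{s ∈ S | s < x}`. An antichain `Γ` with coordinate sets `𝐢`, `𝐣` pairs the `t`-th
smallest element of `𝐢` with the `t`-th smallest element of `𝐣`, and `Γ*` pairs `[n] \ 𝐣` with
`[n] \ 𝐢` in the same way. For such a pairing, `(a, b) ∈ I(Γ)` iff `c_𝐢(a) < c_𝐣(b + 1)`, and
`(a, b)` lies below `Γ` iff `c_𝐣(b) < c_𝐢(a + 1)`; passing to a complement turns `c_𝐢(x)` into
`x - 1 - c_𝐢(x)`.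

The maximal elements of `Δ⁺ \ I(Γ)` are the roots `(i_{s-1} + 1, j_s - 1)` obtained from the gaps
`(i_{s-1}, j_s)`, `1 ≤ s ≤ k + 1`, with `i₀ = 0`, `j_{k+1} = n + 1`, whenever `i_{s-1} + 1 < j_s`.
Hence a root `(a, b)` lies in `I(𝔛(Γ)*)` iff at most `b - a` of these roots meet `[a, b]`, and it
lies outside the down-set of `Γ*` iff at most `b - a` gaps satisfy `i_{s-1} < b`, `a < j_s`. The two
counts differ only by the empty gaps `j_s = i_{s-1} + 1` of that window, and a single empty gap
already bounds the number of gaps in the window by `b - a`. So `Δ⁺ \ I(𝔛(Γ)*)` is the down-set of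
`Γ*`, whose maximal elements form `Γ*`.
-/

section Count

variable {F : Finset ℕ} {a b t : ℕ}

lemma Finset.finite_ofPred_mem (F : Finset ℕ) : (Set.ofPred (· ∈ F)).Finite := F.finite_toSet

lemma Nat.nth_mem_eq_getD_sort (F : Finset ℕ) (t : ℕ) :
    Nat.nth (· ∈ F) t = (F.sort (· ≤ ·)).getD t 0 := by
  rw [Nat.nth_eq_getD_sort F.finite_ofPred_mem]
  congr
  ext
  simp

lemma Nat.count_mem_eq_card_filter_lt (F : Finset ℕ) (b : ℕ) :
    Nat.count (· ∈ F) b = #{x ∈ F | x < b} := by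
  rw [Nat.count_eq_card_filter_range]
  congr 1
  ext
  simp [and_comm]

lemma Nat.count_mem_le_card (F : Finset ℕ) (b : ℕ) : Nat.count (· ∈ F) b ≤ #F := by
  rw [Nat.count_mem_eq_card_filter_lt]
  exact card_filter_le _ _

lemma Nat.count_mem_lt_card (hb : b ∈ F) : Nat.count (· ∈ F) b < #F := by
  simpa using Nat.count_lt_card F.finite_ofPred_mem hb

lemma Nat.nth_mem_of_lt_card_finset (ht : t < #F) : Nat.nth (· ∈ F) t ∈ F :=
  Nat.nth_mem_of_lt_card F.finite_ofPred_mem (by simpa using ht)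

lemma Nat.count_nth_of_lt_card_finset (ht : t < #F) :
    Nat.count (· ∈ F) (Nat.nth (· ∈ F) t) = t :=
  Nat.count_nth_of_lt_card_finite F.finite_ofPred_mem (by simpa using ht)

lemma Nat.nth_lt_iff_lt_count_finset (ht : t < #F) :
    Nat.nth (· ∈ F) t < b ↔ t < Nat.count (· ∈ F) b := by
  refine ⟨fun h => ?_, Nat.nth_lt_of_lt_count⟩
  simpa only [Nat.count_nth_of_lt_card_finset ht] using
    Nat.count_strict_mono (Nat.nth_mem_of_lt_card_finset ht) h

lemma Nat.count_le_count_add_sub (p : ℕ → Prop) [DecidablePred p] (h : a ≤ b) :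
    Nat.count p b ≤ Nat.count p a + (b - a) := by
  obtain ⟨d, rfl⟩ := Nat.exists_eq_add_of_le h
  rw [Nat.count_add, Nat.add_sub_cancel_left]
  exact Nat.add_le_add_left (Nat.count_le _) _

lemma Nat.count_add_one_le (p : ℕ → Prop) [DecidablePred p] (a : ℕ) :
    Nat.count p (a + 1) ≤ Nat.count p a + 1 := by
  rw [Nat.count_succ]
  split_ifs <;> omega

lemma Nat.count_insert_of_lt (ha : a ∉ F) (h : a < b) :
    Nat.count (· ∈ insert a F) b = Nat.count (· ∈ F) b + 1 := by
  rw [Nat.count_mem_eq_card_filter_lt, Nat.count_mem_eq_card_filter_lt, filter_insert, if_pos h,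
    card_insert_of_notMem fun h' => ha (mem_filter.1 h').1]

lemma Nat.count_insert_of_le (h : b ≤ a) :
    Nat.count (· ∈ insert a F) b = Nat.count (· ∈ F) b := by
  rw [Nat.count_mem_eq_card_filter_lt, Nat.count_mem_eq_card_filter_lt, filter_insert,
    if_neg (by omega)]

lemma Nat.count_sdiff_add_count {n : ℕ} (hF : F ⊆ Icc 1 n) (hb : b ≤ n + 1) :
    Nat.count (· ∈ Icc 1 n \ F) b + Nat.count (· ∈ F) b = b - 1 := by
  induction b with
  | zero => simp
  | succ b ih =>
    have ih := ih (by omega)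
    rw [Nat.count_succ, Nat.count_succ]
    by_cases hbF : b ∈ F
    · have := (mem_Icc.1 (hF hbF)).1
      rw [if_neg fun h => (mem_sdiff.1 h).2 hbF, if_pos hbF]
      omega
    · by_cases hb1 : 1 ≤ b
      · rw [if_pos (mem_sdiff.2 ⟨mem_Icc.2 ⟨hb1, by omega⟩, hbF⟩), if_neg hbF]
        omega
      · rw [if_neg fun h => hb1 (mem_Icc.1 (mem_sdiff.1 h).1).1, if_neg hbF]
        omega

lemma Nat.count_mem_image_eq_card_filter {α : Type*} {S : Finset α} {f : α → ℕ}
    (hf : Set.InjOn f (S : Set α)) (b : ℕ) :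
    Nat.count (· ∈ S.image f) b = #{s ∈ S | f s < b} := by
  rw [Nat.count_mem_eq_card_filter_lt, filter_image,
    Finset.card_image_of_injOn (hf.mono (coe_subset.2 (filter_subset _ _)))]

end Count

section Pairing

variable {X Y : Finset ℕ}

noncomputable def pairing (X Y : Finset ℕ) : Finset (ℕ × ℕ) :=
  (range #X).image fun t => (Nat.nth (· ∈ X) t, Nat.nth (· ∈ Y) t)

lemma dualAC_eq_pairing (n : ℕ) (Γ : Finset (ℕ × ℕ)) :
    dualAC n Γ = pairing (Icc 1 n \ Γ.image Prod.snd) (Icc 1 n \ Γ.image Prod.fst) := by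
  simp only [dualAC, pairing, length_sort, Nat.nth_mem_eq_getD_sort]

lemma mem_pairing (hXY : #X = #Y) {w : ℕ × ℕ} :
    w ∈ pairing X Y ↔
      w.1 ∈ X ∧ w.2 ∈ Y ∧ Nat.count (· ∈ X) w.1 = Nat.count (· ∈ Y) w.2 := by
  constructor
  · intro hw
    obtain ⟨t, ht, rfl⟩ := mem_image.1 hw
    rw [mem_range] at ht
    exact ⟨Nat.nth_mem_of_lt_card_finset ht, Nat.nth_mem_of_lt_card_finset (hXY ▸ ht),
      by rw [Nat.count_nth_of_lt_card_finset ht, Nat.count_nth_of_lt_card_finset (hXY ▸ ht)]⟩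
  · rintro ⟨hx, hy, hc⟩
    refine mem_image.2 ⟨_, mem_range.2 (Nat.count_mem_lt_card hx), ?_⟩
    rw [Nat.nth_count hx, hc, Nat.nth_count hy]

lemma mem_pairing_swap (hXY : #X = #Y) {w : ℕ × ℕ} :
    w.swap ∈ pairing Y X ↔ w ∈ pairing X Y := by
  rw [mem_pairing hXY, mem_pairing hXY.symm, Prod.fst_swap, Prod.snd_swap]
  tauto

lemma mem_pairing_iff_count (hXY : #X = #Y) {x y : ℕ} :
    (x, y) ∈ pairing X Y ↔
      Nat.count (· ∈ X) x < Nat.count (· ∈ Y) (y + 1) ∧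
        Nat.count (· ∈ Y) y < Nat.count (· ∈ X) (x + 1) := by
  rw [mem_pairing hXY, Nat.count_succ, Nat.count_succ]
  by_cases hx : x ∈ X <;> by_cases hy : y ∈ Y <;>
    simp only [hx, hy, ↓reduceIte, true_and, false_and, false_iff, add_zero, not_and, not_lt] <;>
    omega

lemma exists_mem_pairing_ge_le (hXY : #X = #Y) (a b : ℕ) :
    (∃ w ∈ pairing X Y, a ≤ w.1 ∧ w.2 ≤ b) ↔
      Nat.count (· ∈ X) a < Nat.count (· ∈ Y) (b + 1) := by
  constructor
  · rintro ⟨w, hw, ha, hb⟩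
    obtain ⟨-, hy, hc⟩ := (mem_pairing hXY).1 hw
    calc Nat.count (· ∈ X) a ≤ Nat.count (· ∈ X) w.1 := Nat.count_monotone _ ha
      _ = Nat.count (· ∈ Y) w.2 := hc
      _ < Nat.count (· ∈ Y) (b + 1) := Nat.count_strict_mono hy (by omega)
  · intro h
    have ht : Nat.count (· ∈ X) a < #X := hXY ▸ h.trans_le (Nat.count_mem_le_card _ _)
    refine ⟨_, mem_image_of_mem _ (mem_range.2 ht), ?_, ?_⟩
    · exact not_lt.1 fun h' => lt_irrefl _ ((Nat.nth_lt_iff_lt_count_finset ht).1 h')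
    · exact Nat.lt_add_one_iff.1 (Nat.nth_lt_of_lt_count h)

lemma exists_mem_pairing_le_ge (hXY : #X = #Y) (a b : ℕ) :
    (∃ w ∈ pairing X Y, w.1 ≤ a ∧ b ≤ w.2) ↔
      Nat.count (· ∈ Y) b < Nat.count (· ∈ X) (a + 1) := by
  rw [← exists_mem_pairing_ge_le hXY.symm]
  constructor
  · rintro ⟨w, hw, ha, hb⟩
    exact ⟨w.swap, (mem_pairing_swap hXY).2 hw, hb, ha⟩
  · rintro ⟨w, hw, hb, ha⟩
    exact ⟨w.swap, (mem_pairing_swap hXY.symm).2 hw, ha, hb⟩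

lemma card_filter_pairing (hXY : #X = #Y) (a b : ℕ) :
    #{w ∈ pairing X Y | w.1 < b ∧ a ≤ w.2} = Nat.count (· ∈ X) b - Nat.count (· ∈ Y) a := by
  have hfilter : {w ∈ pairing X Y | w.1 < b ∧ a ≤ w.2} =
      (Ico (Nat.count (· ∈ Y) a) (Nat.count (· ∈ X) b)).image
        fun t => (Nat.nth (· ∈ X) t, Nat.nth (· ∈ Y) t) := by
    rw [pairing, filter_image]
    congr 1
    ext t
    simp only [mem_filter, mem_range, mem_Ico, not_lt.symm]
    constructor
    · rintro ⟨ht, hb, ha⟩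
      exact ⟨fun h => ha ((Nat.nth_lt_iff_lt_count_finset (hXY ▸ ht)).2 h),
        (Nat.nth_lt_iff_lt_count_finset ht).1 hb⟩
    · rintro ⟨ha, hb⟩
      have ht : t < #X := hb.trans_le (Nat.count_mem_le_card _ _)
      exact ⟨ht, (Nat.nth_lt_iff_lt_count_finset ht).2 hb,
        fun h => ha ((Nat.nth_lt_iff_lt_count_finset (hXY ▸ ht)).1 h)⟩
  rw [hfilter, card_image_of_injOn, Nat.card_Ico]
  intro s hs t ht hst
  have hs : s < #X := (mem_Ico.1 hs).2.trans_le (Nat.count_mem_le_card _ _)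
  have ht : t < #X := (mem_Ico.1 ht).2.trans_le (Nat.count_mem_le_card _ _)
  rw [← Nat.count_nth_of_lt_card_finset hs, ← Nat.count_nth_of_lt_card_finset ht]
  exact congrArg _ (Prod.ext_iff.1 hst).1

lemma fst_lt_of_mem_pairing (hXY : #X = #Y) {w : ℕ × ℕ} (hw : w ∈ pairing X Y) {c : ℕ}
    (hc : Nat.count (· ∈ Y) w.2 < Nat.count (· ∈ X) c) : w.1 < c :=
  Nat.lt_of_count_lt_count (((mem_pairing hXY).1 hw).2.2 ▸ hc)

lemma count_le_of_adjacent_mem_pairing (hXY : #X = #Y) {x a b : ℕ}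
    (hx : (x, x + 1) ∈ pairing X Y) (hxb : x < b) (hax : a ≤ x) :
    Nat.count (· ∈ X) b ≤ Nat.count (· ∈ Y) (a + 1) + (b - a) := by
  have hxX : x ∈ X := ((mem_pairing hXY).1 hx).1
  have hc : Nat.count (· ∈ X) x = Nat.count (· ∈ Y) (x + 1) := ((mem_pairing hXY).1 hx).2.2
  have hX := Nat.count_le_count_add_sub (· ∈ X) (show x + 1 ≤ b by omega)
  have hY := Nat.count_le_count_add_sub (· ∈ Y) (show a + 1 ≤ x + 1 by omega)
  have hstep : Nat.count (· ∈ X) (x + 1) = Nat.count (· ∈ X) x + 1 :=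
    Nat.count_succ_eq_succ_count_iff.2 hxX
  omega

lemma count_le_count_of_pairing (hXY : #X = #Y) (hle : ∀ w ∈ pairing X Y, w.1 ≤ w.2) (z : ℕ) :
    Nat.count (· ∈ Y) z ≤ Nat.count (· ∈ X) z := by
  by_contra! h
  have ht : Nat.count (· ∈ X) z < #X := hXY ▸ h.trans_le (Nat.count_mem_le_card _ _)
  have hw := hle _ (mem_image_of_mem _ (mem_range.2 ht))
  have hX : ¬ Nat.nth (· ∈ X) (Nat.count (· ∈ X) z) < z :=
    fun h' => lt_irrefl _ ((Nat.nth_lt_iff_lt_count_finset ht).1 h')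
  have hY := Nat.nth_lt_of_lt_count h
  dsimp only at hw
  omega

end Pairing

section Antichain

variable {n : ℕ} {Γ : Finset (ℕ × ℕ)}

lemma mem_roots {w : ℕ × ℕ} : w ∈ roots n ↔ 1 ≤ w.1 ∧ w.1 ≤ w.2 ∧ w.2 ≤ n := by
  simp only [roots, mem_filter, mem_product, mem_Icc]
  omega

lemma isAC_pairing {X Y : Finset ℕ} (hXY : #X = #Y) (hX : X ⊆ Icc 1 n) (hY : Y ⊆ Icc 1 n)
    (hle : ∀ w ∈ pairing X Y, w.1 ≤ w.2) : IsAC n (pairing X Y) := by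
  refine ⟨fun w hw => ?_, fun p hp q hq hpq => ?_⟩
  · obtain ⟨hx, hy, -⟩ := (mem_pairing hXY).1 hw
    have := mem_Icc.1 (hX hx)
    have := mem_Icc.1 (hY hy)
    have := hle w hw
    exact mem_roots.2 ⟨by omega, by omega, by omega⟩
  · obtain ⟨hpx, hpy, hp⟩ := (mem_pairing hXY).1 hp
    obtain ⟨hqx, hqy, hq⟩ := (mem_pairing hXY).1 hq
    have h1 : Nat.count (· ∈ X) q.1 ≤ Nat.count (· ∈ X) p.1 := Nat.count_monotone _ hpq.1
    have h2 : Nat.count (· ∈ Y) p.2 ≤ Nat.count (· ∈ Y) q.2 := Nat.count_monotone _ hpq.2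
    exact Prod.ext (Nat.count_injective (p := (· ∈ X)) hpx hqx (by omega))
      (Nat.count_injective (p := (· ∈ Y)) hpy hqy (by omega))

lemma isAC_maxOf {S : Finset (ℕ × ℕ)} (hS : S ⊆ roots n) : IsAC n (maxOf S) :=
  ⟨fun _ hw => hS (mem_filter.1 hw).1,
    fun _ hp _ hq hpq => ((mem_filter.1 hp).2 _ (mem_filter.1 hq).1 hpq).symm⟩

lemma IsAC.injOn_fst (hΓ : IsAC n Γ) : Set.InjOn Prod.fst (Γ : Set (ℕ × ℕ)) := by
  intro γ hγ γ' hγ' h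
  rcases le_total γ.2 γ'.2 with h2 | h2
  · exact hΓ.2 γ hγ γ' hγ' ⟨h.ge, h2⟩
  · exact (hΓ.2 γ' hγ' γ hγ ⟨h.le, h2⟩).symm

lemma IsAC.injOn_snd (hΓ : IsAC n Γ) : Set.InjOn Prod.snd (Γ : Set (ℕ × ℕ)) := by
  intro γ hγ γ' hγ' h
  rcases le_total γ.1 γ'.1 with h1 | h1
  · exact (hΓ.2 γ' hγ' γ hγ ⟨h1, h.ge⟩).symm
  · exact hΓ.2 γ hγ γ' hγ' ⟨h1, h.le⟩

lemma IsAC.card_image_fst_eq_card_image_snd (hΓ : IsAC n Γ) :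
    #(Γ.image Prod.fst) = #(Γ.image Prod.snd) := by
  rw [card_image_of_injOn hΓ.injOn_fst, card_image_of_injOn hΓ.injOn_snd]

lemma IsAC.image_fst_subset (hΓ : IsAC n Γ) : Γ.image Prod.fst ⊆ Icc 1 n := by
  intro x hx
  obtain ⟨γ, hγ, rfl⟩ := mem_image.1 hx
  have := mem_roots.1 (hΓ.1 hγ)
  exact mem_Icc.2 ⟨by omega, by omega⟩

lemma IsAC.image_snd_subset (hΓ : IsAC n Γ) : Γ.image Prod.snd ⊆ Icc 1 n := by
  intro y hy
  obtain ⟨γ, hγ, rfl⟩ := mem_image.1 hy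
  have := mem_roots.1 (hΓ.1 hγ)
  exact mem_Icc.2 ⟨by omega, by omega⟩

lemma IsAC.card_sdiff_image_snd_eq (hΓ : IsAC n Γ) :
    #(Icc 1 n \ Γ.image Prod.snd) = #(Icc 1 n \ Γ.image Prod.fst) := by
  rw [card_sdiff_of_subset hΓ.image_snd_subset, card_sdiff_of_subset hΓ.image_fst_subset,
    hΓ.card_image_fst_eq_card_image_snd]

lemma IsAC.eq_pairing (hΓ : IsAC n Γ) : Γ = pairing (Γ.image Prod.fst) (Γ.image Prod.snd) := by
  have hcount : ∀ γ ∈ Γ, Nat.count (· ∈ Γ.image Prod.fst) γ.1 =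
      Nat.count (· ∈ Γ.image Prod.snd) γ.2 := by
    intro γ hγ
    rw [Nat.count_mem_image_eq_card_filter hΓ.injOn_fst,
      Nat.count_mem_image_eq_card_filter hΓ.injOn_snd]
    congr 1
    refine filter_congr fun γ' hγ' => ⟨fun h => ?_, fun h => ?_⟩
    · by_contra! h'
      rw [hΓ.2 γ hγ γ' hγ' ⟨h.le, h'⟩] at h
      exact lt_irrefl _ h
    · by_contra! h'
      rw [hΓ.2 γ' hγ' γ hγ ⟨h', h.le⟩] at h
      exact lt_irrefl _ h
  ext w
  rw [mem_pairing hΓ.card_image_fst_eq_card_image_snd]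
  refine ⟨fun hw => ⟨mem_image_of_mem _ hw, mem_image_of_mem _ hw, hcount w hw⟩, ?_⟩
  rintro ⟨hx, hy, hc⟩
  obtain ⟨γ, hγ, hγx⟩ := mem_image.1 hx
  have hγy : γ.2 = w.2 := Nat.count_injective (p := (· ∈ Γ.image Prod.snd))
    (mem_image_of_mem _ hγ) hy (by rw [← hcount γ hγ, hγx, hc])
  rwa [← Prod.ext hγx hγy]

lemma IsAC.count_snd_le_count_fst (hΓ : IsAC n Γ) (z : ℕ) :
    Nat.count (· ∈ Γ.image Prod.snd) z ≤ Nat.count (· ∈ Γ.image Prod.fst) z := by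
  refine count_le_count_of_pairing hΓ.card_image_fst_eq_card_image_snd (fun w hw => ?_) z
  rw [← hΓ.eq_pairing] at hw
  exact (mem_roots.1 (hΓ.1 hw)).2.1

lemma IsAC.dual (hΓ : IsAC n Γ) : IsAC n (dualAC n Γ) := by
  have hcard := hΓ.card_sdiff_image_snd_eq
  rw [dualAC_eq_pairing]
  refine isAC_pairing hcard sdiff_subset sdiff_subset fun w hw => Nat.lt_add_one_iff.1 ?_
  have hy : w.2 ∈ Icc 1 n \ Γ.image Prod.fst := ((mem_pairing hcard).1 hw).2.1
  have hyn := mem_Icc.1 (mem_sdiff.1 hy).1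
  refine fst_lt_of_mem_pairing hcard hw ?_
  have h1 := Nat.count_sdiff_add_count hΓ.image_snd_subset (b := w.2 + 1) (by omega)
  have h2 := Nat.count_sdiff_add_count hΓ.image_fst_subset (b := w.2 + 1) (by omega)
  have h3 := hΓ.count_snd_le_count_fst (w.2 + 1)
  have h4 : Nat.count (· ∈ Icc 1 n \ Γ.image Prod.fst) (w.2 + 1) =
      Nat.count (· ∈ Icc 1 n \ Γ.image Prod.fst) w.2 + 1 :=
    Nat.count_succ_eq_succ_count_iff.2 hy
  omega

lemma mem_upIdeal_pairing_iff {X Y : Finset ℕ} (hXY : #X = #Y) {w : ℕ × ℕ} :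
    w ∈ upIdeal n (pairing X Y) ↔
      w ∈ roots n ∧ Nat.count (· ∈ X) w.1 < Nat.count (· ∈ Y) (w.2 + 1) := by
  rw [upIdeal, mem_filter, ← exists_mem_pairing_ge_le hXY]
  rfl

lemma IsAC.maxOf_downset (hΓ : IsAC n Γ) : maxOf {w ∈ roots n | ∃ γ ∈ Γ, rle w γ} = Γ := by
  ext w
  simp only [maxOf, mem_filter]
  constructor
  · rintro ⟨⟨-, γ, hγ, hwγ⟩, hmax⟩
    rwa [← hmax γ ⟨hΓ.1 hγ, γ, hγ, le_rfl, le_rfl⟩ hwγ]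
  · intro hw
    refine ⟨⟨hΓ.1 hw, w, hw, le_rfl, le_rfl⟩, fun y ⟨_, γ, hγ, hyγ⟩ hwy => ?_⟩
    obtain rfl := hΓ.2 w hw γ hγ ⟨hyγ.1.trans hwy.1, hwy.2.trans hyγ.2⟩
    exact Prod.ext (le_antisymm hwy.1 hyγ.1) (le_antisymm hyγ.2 hwy.2)

lemma mem_maxOf_iff_of_downClosed {S : Finset (ℕ × ℕ)} (hS : S ⊆ roots n)
    (hdown : ∀ p ∈ S, ∀ q ∈ roots n, rle q p → q ∈ S) {x y : ℕ} :
    (x, y) ∈ maxOf S ↔ (x, y) ∈ S ∧ (x - 1, y) ∉ S ∧ (x, y + 1) ∉ S := by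
  simp only [maxOf, mem_filter]
  constructor
  · rintro ⟨hw, hmax⟩
    have hx := (mem_roots.1 (hS hw)).1
    refine ⟨hw, fun h => ?_, fun h => ?_⟩
    · have := congrArg Prod.fst (hmax _ h ⟨Nat.sub_le x 1, le_rfl⟩)
      dsimp only at this
      omega
    · have := congrArg Prod.snd (hmax _ h ⟨le_rfl, Nat.le_succ y⟩)
      dsimp only at this
      omega
  · rintro ⟨hw, hleft, hup⟩
    refine ⟨hw, fun q hq ⟨hqx, hyq⟩ => ?_⟩
    have hr := mem_roots.1 (hS hw)
    have hqr := mem_roots.1 (hS hq)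
    dsimp only at hqx hyq hr
    by_cases hlt : q.1 < x
    · exact absurd (hdown q hq _ (mem_roots.2 ⟨by omega, by omega, by omega⟩) ⟨by omega, hyq⟩)
        hleft
    by_cases hgt : y < q.2
    · exact absurd (hdown q hq _ (mem_roots.2 ⟨by omega, by omega, by omega⟩) ⟨hqx, by omega⟩)
        hup
    exact Prod.ext (by dsimp only; omega) (by dsimp only; omega)

end Antichain

section Reverse

variable {n : ℕ} {Γ : Finset (ℕ × ℕ)}

/-- The pairs `(i_{s-1}, j_s)`, `1 ≤ s ≤ k + 1`, for `Γ = {(i₁, j₁), …, (i_k, j_k)}`, with the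
sentinels `i₀ = 0` and `j_{k+1} = n + 1`. -/
noncomputable def gaps (n : ℕ) (Γ : Finset (ℕ × ℕ)) : Finset (ℕ × ℕ) :=
  pairing (insert 0 (Γ.image Prod.fst)) (insert (n + 1) (Γ.image Prod.snd))

lemma IsAC.zero_notMem_image_fst (hΓ : IsAC n Γ) : 0 ∉ Γ.image Prod.fst :=
  fun h => by simpa using hΓ.image_fst_subset h

lemma IsAC.card_gaps (hΓ : IsAC n Γ) :
    #(insert 0 (Γ.image Prod.fst)) = #(insert (n + 1) (Γ.image Prod.snd)) := by
  have htop : n + 1 ∉ Γ.image Prod.snd := fun h => by simpa using hΓ.image_snd_subset h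
  rw [card_insert_of_notMem hΓ.zero_notMem_image_fst, card_insert_of_notMem htop,
    hΓ.card_image_fst_eq_card_image_snd]

lemma IsAC.fst_lt_snd_of_mem_gaps (hΓ : IsAC n Γ) {g : ℕ × ℕ} (hg : g ∈ gaps n Γ) :
    g.1 < g.2 := by
  refine fst_lt_of_mem_pairing hΓ.card_gaps hg ?_
  have hy : 1 ≤ g.2 ∧ g.2 ≤ n + 1 := by
    rcases mem_insert.1 ((mem_pairing hΓ.card_gaps).1 hg).2.1 with hy | hy
    · omega
    · have := mem_Icc.1 (hΓ.image_snd_subset hy)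
      omega
  rw [Nat.count_insert_of_le hy.2, Nat.count_insert_of_lt hΓ.zero_notMem_image_fst hy.1]
  exact Nat.lt_add_one_iff.2 (hΓ.count_snd_le_count_fst _)

lemma IsAC.mem_compl_upIdeal_iff (hΓ : IsAC n Γ) {w : ℕ × ℕ} :
    w ∈ roots n \ upIdeal n Γ ↔ w ∈ roots n ∧
      Nat.count (· ∈ insert (n + 1) (Γ.image Prod.snd)) (w.2 + 1) <
        Nat.count (· ∈ insert 0 (Γ.image Prod.fst)) w.1 := by
  have hup := mem_upIdeal_pairing_iff (n := n) hΓ.card_image_fst_eq_card_image_snd (w := w)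
  rw [← hΓ.eq_pairing] at hup
  rw [mem_sdiff, hup, not_and, not_lt]
  refine and_congr_right fun hw => ?_
  have hr := mem_roots.1 hw
  rw [Nat.count_insert_of_le (show w.2 + 1 ≤ n + 1 by omega),
    Nat.count_insert_of_lt hΓ.zero_notMem_image_fst (show 0 < w.1 by omega), Nat.lt_add_one_iff]
  exact ⟨fun h => h hw, fun h _ => h⟩

lemma IsAC.mem_xrev_iff (hΓ : IsAC n Γ) {x y : ℕ} :
    (x + 1, y) ∈ Xrev n Γ ↔ x < y ∧ (x, y + 1) ∈ gaps n Γ := by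
  have hdown : ∀ p ∈ roots n \ upIdeal n Γ, ∀ q ∈ roots n, rle q p →
      q ∈ roots n \ upIdeal n Γ := by
    simp only [mem_sdiff, upIdeal, mem_filter, not_and, not_exists]
    exact fun p hp q hq hqp => ⟨hq, fun _ γ hγ hγq =>
      hp.2 hp.1 γ hγ ⟨hqp.1.trans hγq.1, hγq.2.trans hqp.2⟩⟩
  rw [Xrev, mem_maxOf_iff_of_downClosed sdiff_subset hdown, hΓ.mem_compl_upIdeal_iff,
    hΓ.mem_compl_upIdeal_iff, hΓ.mem_compl_upIdeal_iff, mem_roots, mem_roots, mem_roots, gaps]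
  dsimp only
  rw [Nat.add_sub_cancel]
  set X := insert 0 (Γ.image Prod.fst)
  set Y := insert (n + 1) (Γ.image Prod.snd)
  have hX : Nat.count (· ∈ X) (x + 1) ≤ Nat.count (· ∈ X) x + 1 := Nat.count_add_one_le _ x
  have hY : Nat.count (· ∈ Y) (y + 1 + 1) ≤ Nat.count (· ∈ Y) (y + 1) + 1 :=
    Nat.count_add_one_le _ _
  constructor
  · rintro ⟨⟨hr, hlt⟩, hleft, hup⟩
    have h1 : Nat.count (· ∈ X) x ≤ Nat.count (· ∈ Y) (y + 1) := by
      rcases Nat.eq_zero_or_pos x with rfl | hx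
      · exact (Nat.count_zero _).trans_le (Nat.zero_le _)
      · exact not_lt.1 fun h => hleft ⟨⟨hx, by omega, by omega⟩, h⟩
    have h2 : Nat.count (· ∈ X) x < Nat.count (· ∈ Y) (y + 1 + 1) := by
      rcases Nat.lt_or_ge y n with hyn | hyn
      · exact lt_of_lt_of_le (by omega) (not_lt.1 fun h => hup ⟨⟨by omega, by omega, hyn⟩, h⟩)
      · obtain rfl : y = n := by omega
        have hYtop : Nat.count (· ∈ Y) (y + 1 + 1) = Nat.count (· ∈ Y) (y + 1) + 1 :=
          Nat.count_succ_eq_succ_count_iff.2 (mem_insert_self _ _)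
        omega
    exact ⟨by omega, (mem_pairing_iff_count hΓ.card_gaps).2 ⟨h2, hlt⟩⟩
  · rintro ⟨hxy, hg⟩
    have hxX : x ∈ X := ((mem_pairing hΓ.card_gaps).1 hg).1
    have hyY : y + 1 ∈ Y := ((mem_pairing hΓ.card_gaps).1 hg).2.1
    have hc : Nat.count (· ∈ X) x = Nat.count (· ∈ Y) (y + 1) :=
      ((mem_pairing hΓ.card_gaps).1 hg).2.2
    have hyn : y + 1 ≤ n + 1 := by
      rcases mem_insert.1 hyY with hy | hy
      · omega
      · exact (mem_Icc.1 (hΓ.image_snd_subset hy)).2.trans (Nat.le_succ n)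
    have hXs : Nat.count (· ∈ X) (x + 1) = Nat.count (· ∈ X) x + 1 :=
      Nat.count_succ_eq_succ_count_iff.2 hxX
    have hYs : Nat.count (· ∈ Y) (y + 1 + 1) = Nat.count (· ∈ Y) (y + 1) + 1 :=
      Nat.count_succ_eq_succ_count_iff.2 hyY
    exact ⟨⟨⟨by omega, by omega, by omega⟩, by omega⟩, fun _ => by omega, fun _ => by omega⟩

lemma IsAC.card_filter_xrev (hΓ : IsAC n Γ) (a b : ℕ) :
    #{δ ∈ Xrev n Γ | δ.1 < b + 1 ∧ a ≤ δ.2} =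
      #{g ∈ {g ∈ gaps n Γ | g.1 < b ∧ a + 1 ≤ g.2} | g.1 + 2 ≤ g.2} := by
  have hXrev : ∀ {δ : ℕ × ℕ}, δ ∈ Xrev n Γ → 1 ≤ δ.1 := fun hδ =>
    (mem_roots.1 (mem_sdiff.1 (mem_filter.1 hδ).1).1).1
  refine card_nbij' (fun δ => (δ.1 - 1, δ.2 + 1)) (fun g => (g.1 + 1, g.2 - 1)) ?_ ?_ ?_ ?_
  · rintro ⟨x, y⟩ hδ
    simp only [mem_coe, mem_filter] at hδ ⊢
    obtain ⟨x, rfl⟩ := Nat.exists_eq_add_of_le' (hXrev hδ.1)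
    rw [Nat.add_sub_cancel]
    have := hΓ.mem_xrev_iff.1 hδ.1
    exact ⟨⟨this.2, by omega, by omega⟩, by omega⟩
  · rintro ⟨x, y⟩ hg
    simp only [mem_coe, mem_filter] at hg ⊢
    obtain ⟨y, rfl⟩ := Nat.exists_eq_add_of_le' (show 1 ≤ y by omega)
    rw [Nat.add_sub_cancel]
    exact ⟨hΓ.mem_xrev_iff.2 ⟨by omega, hg.1.1⟩, by omega, by omega⟩
  · rintro ⟨x, y⟩ hδ
    have := hXrev (mem_filter.1 hδ).1
    simp only [Prod.mk.injEq]
    omega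
  · rintro ⟨x, y⟩ hg
    have := (mem_filter.1 hg).2
    simp only [Prod.mk.injEq]
    omega

lemma IsAC.card_filter_xrev_le_iff (hΓ : IsAC n Γ) (a b : ℕ) :
    #{δ ∈ Xrev n Γ | δ.1 < b + 1 ∧ a ≤ δ.2} ≤ b - a ↔
      Nat.count (· ∈ insert 0 (Γ.image Prod.fst)) b -
        Nat.count (· ∈ insert (n + 1) (Γ.image Prod.snd)) (a + 1) ≤ b - a := by
  rw [hΓ.card_filter_xrev, ← card_filter_pairing hΓ.card_gaps]
  change _ ↔ #{g ∈ gaps n Γ | g.1 < b ∧ a + 1 ≤ g.2} ≤ b - a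
  by_cases hnonempty : ∀ g ∈ {g ∈ gaps n Γ | g.1 < b ∧ a + 1 ≤ g.2}, g.1 + 2 ≤ g.2
  · rw [filter_true_of_mem hnonempty]
  obtain ⟨g, hg, hempty⟩ := not_forall₂.1 hnonempty
  obtain ⟨hgG, hgb, hga⟩ := mem_filter.1 hg
  have hg2 : g.2 = g.1 + 1 := by
    have := hΓ.fst_lt_snd_of_mem_gaps hgG
    omega
  rw [show g = (g.1, g.1 + 1) from Prod.ext rfl hg2] at hgG
  have hcount := count_le_of_adjacent_mem_pairing hΓ.card_gaps (a := a) hgG hgb (by omega)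
  have hcard : #{g ∈ gaps n Γ | g.1 < b ∧ a + 1 ≤ g.2} ≤ b - a := by
    rw [gaps, card_filter_pairing hΓ.card_gaps]
    omega
  exact iff_of_true ((card_filter_le _ _).trans hcard) hcard

lemma IsAC.mem_upIdeal_dualAC_xrev_iff (hΓ : IsAC n Γ) {w : ℕ × ℕ} (hw : w ∈ roots n) :
    w ∈ upIdeal n (dualAC n (Xrev n Γ)) ↔ ¬ ∃ σ ∈ dualAC n Γ, rle w σ := by
  obtain ⟨a, b⟩ := w
  obtain ⟨ha, hab, hb⟩ := mem_roots.1 hw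
  dsimp only at ha hab hb
  have hΔ : IsAC n (Xrev n Γ) := isAC_maxOf sdiff_subset
  rw [dualAC_eq_pairing, dualAC_eq_pairing, mem_upIdeal_pairing_iff hΔ.card_sdiff_image_snd_eq]
  simp only [rle]
  rw [exists_mem_pairing_le_ge hΓ.card_sdiff_image_snd_eq, and_iff_right hw, not_lt]
  have hΔcount := card_filter_pairing hΔ.card_image_fst_eq_card_image_snd a (b + 1)
  rw [← hΔ.eq_pairing] at hΔcount
  have key := hΓ.card_filter_xrev_le_iff a b
  rw [hΔcount, Nat.count_insert_of_lt hΓ.zero_notMem_image_fst (by omega),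
    Nat.count_insert_of_le (by omega)] at key
  have c1 := Nat.count_sdiff_add_count hΔ.image_snd_subset (b := a) (by omega)
  have c2 := Nat.count_sdiff_add_count hΔ.image_fst_subset (b := b + 1) (by omega)
  have c3 := Nat.count_sdiff_add_count hΓ.image_fst_subset (b := b) (by omega)
  have c4 := Nat.count_sdiff_add_count hΓ.image_snd_subset (b := a + 1) (by omega)
  omega

end Reverse

theorem stmt13_general (n : ℕ) (Γ : Finset (ℕ × ℕ)) (hΓ : IsAC n Γ) :
    Xrev n (dualAC n (Xrev n Γ)) = dualAC n Γ := by
  have hcompl : roots n \ upIdeal n (dualAC n (Xrev n Γ)) =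
      {w ∈ roots n | ∃ σ ∈ dualAC n Γ, rle w σ} := by
    ext w
    rw [mem_sdiff, mem_filter]
    exact and_congr_right fun hw => by rw [hΓ.mem_upIdeal_dualAC_xrev_iff hw, not_not]
  rw [Xrev, hcompl, hΓ.dual.maxOf_downset]

/-- For every antichain `Γ` in `Δ⁺(A_n)`, `𝔛(Γ)* = 𝔛⁻¹(Γ*)`; equivalently
(applying `𝔛`), `𝔛(𝔛(Γ)*) = Γ*`, i.e. `𝔛⁻¹ = ∗ ∘ 𝔛 ∘ ∗`. -/
theorem stmt13 (n : ℕ) (hn : 1 ≤ n) (Γ : Finset (ℕ × ℕ)) (hΓ : IsAC n Γ) :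
    Xrev n (dualAC n (Xrev n Γ)) = dualAC n Γ :=
  stmt13_general n Γ hΓ
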